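/- If E is a centrally orthocomplete generalized pseudoeffect algebra, then the family of exocentral covers (γ_e)_{e∈E} is a hull system for E; the center Γ(E) is precisely the set of γ-invariant elements of E (elements c such that γ_c f = c∧f for all f ∈ E); and for every c ∈ Γ(E), γ_c = π_c. -/
import Mathlib


/- Common framework: generalized pseudoeffect algebras (GPEAs), after
   Foulis, Pulmannová, Vinceková, "The exocenter and type decompositions for
   generalized pseudoeffect algebras".
   A partial binary operation ⊕ is represented by its graph
   `R : E → E → E → Prop`, where `R a b s` means "a ⊕ b is defined and equals s". -/

universe u v

namespace GPEApaper

/-- Raw data of a partial algebra: the graph of a partial binary operation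
together with a zero element. -/
structure PartialAlg (E : Type u) where
  R : E → E → E → Prop
  zero : E

namespace PartialAlg

variable {E : Type u} (A : PartialAlg E)

/-- The axioms (GPEA1)–(GPEA5) of a generalized pseudoeffect algebra,
including the functionality (well-definedness) of the partial operation. -/
def IsGPEA : Prop :=
  -- ⊕ is a partial operation (single-valued)
  (∀ a b c d : E, A.R a b c → A.R a b d → c = d) ∧
  -- (GPEA1) associativity, both directions
  (∀ a b c ab abc : E, A.R a b ab → A.R ab c abc → ∃ bc, A.R b c bc ∧ A.R a bc abc) ∧
  (∀ a b c bc abc : E, A.R b c bc → A.R a bc abc → ∃ ab, A.R a b ab ∧ A.R ab c abc) ∧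
  -- (GPEA2) conjugacy
  (∀ a b s : E, A.R a b s → (∃ d, A.R d a s) ∧ (∃ e, A.R b e s)) ∧
  -- (GPEA3) cancellation
  (∀ a b c s : E, A.R a b s → A.R a c s → b = c) ∧
  (∀ a b c s : E, A.R b a s → A.R c a s → b = c) ∧
  -- (GPEA4) positivity
  (∀ a b : E, A.R a b A.zero → a = A.zero ∧ b = A.zero) ∧
  -- (GPEA5) zero element
  (∀ a : E, A.R a A.zero a ∧ A.R A.zero a a)

/-- a ⊕ b is defined. -/
def Defined (a b : E) : Prop := ∃ s, A.R a b s

/-- The induced partial order: a ≤ b iff a ⊕ x = b for some x. -/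
def le (a b : E) : Prop := ∃ x, A.R a x b

/-- Orthogonality: p ⊥ q iff p ⊕ q and q ⊕ p both exist and are equal. -/
def perp (a b : E) : Prop := ∃ s, A.R a b s ∧ A.R b a s

/-- b is an upper bound of the set S. -/
def IsUB (S : Set E) (b : E) : Prop := ∀ a ∈ S, A.le a b

/-- s is the supremum (least upper bound) of the set S in (E, ≤). -/
def IsSup (S : Set E) (s : E) : Prop := A.IsUB S s ∧ ∀ b, A.IsUB S b → A.le s b

/-- s is the infimum (greatest lower bound) of the set S in (E, ≤). -/
def IsInf (S : Set E) (s : E) : Prop :=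
  (∀ a ∈ S, A.le s a) ∧ ∀ b, (∀ a ∈ S, A.le b a) → A.le b s

/-- An ideal of a GPEA. -/
def IsIdeal (I : Set E) : Prop :=
  I.Nonempty ∧ (∀ a ∈ I, ∀ b, A.le b a → b ∈ I) ∧
    ∀ a ∈ I, ∀ b ∈ I, ∀ s, A.R a b s → s ∈ I

/-- E = S ⊕ S′ : S and S′ are ideals, elements of S are orthogonal to elements
of S′, and every element of E has a unique decomposition a = a₁ ⊕ a₂ with
a₁ ∈ S, a₂ ∈ S′. -/
def IsDirectSum (S S' : Set E) : Prop :=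
  A.IsIdeal S ∧ A.IsIdeal S' ∧ (∀ a ∈ S, ∀ b ∈ S', A.perp a b) ∧
    ∀ a : E, ∃! p : E × E, p.1 ∈ S ∧ p.2 ∈ S' ∧ A.R p.1 p.2 a

/-- A central ideal (direct summand). -/
def IsCentralIdeal (S : Set E) : Prop := ∃ S', A.IsDirectSum S S'

/-- A normal ideal. -/
def IsNormalIdeal (I : Set E) : Prop :=
  A.IsIdeal I ∧ ∀ a x y s : E, A.R a x s → A.R y a s → (x ∈ I ↔ y ∈ I)

/-- The axioms (EXC1)–(EXC4): π belongs to the exocenter ΓEX(E). -/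
def IsExo (π : E → E) : Prop :=
  (∀ e f s, A.R e f s → A.R (π e) (π f) (π s)) ∧
  (∀ e, π (π e) = π e) ∧
  (∀ e, A.le (π e) e) ∧
  (∀ e f, π e = e → π f = A.zero → A.perp e f)

/-- For a ≤ b, `A.rdiv a b` is the element a/b, i.e. the unique x with
a ⊕ x = b (chosen by Hilbert choice when it exists). -/
noncomputable def rdiv (a b : E) : E :=
  letI : Nonempty E := ⟨A.zero⟩
  Classical.epsilon fun x => A.R a x b

/-- For π in the exocenter, π′ e := (π e)/e. -/
noncomputable def exoCompl (π : E → E) : E → E := fun e => A.rdiv (π e) e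

/-- The order on the exocenter: ξ ≤ π iff ξ = ξ ∘ π. -/
def exoLe (_A : PartialAlg E) (ξ π : E → E) : Prop := ξ = ξ ∘ π

/-- Disjointness in the boolean algebra ΓEX(E): the meet (= composition)
of ξ and π is the zero map. -/
def exoDisjoint (ξ π : E → E) : Prop := ∀ e, ξ (π e) = A.zero

/-- The join in the boolean algebra ΓEX(E): π ∨ ξ = (π′ ∘ ξ′)′. -/
noncomputable def exoSup (π ξ : E → E) : E → E :=
  A.exoCompl (A.exoCompl π ∘ A.exoCompl ξ)

/-- σ is the least upper bound of a set S of exocenter elements,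
with respect to the order of the boolean algebra ΓEX(E). -/
def IsExoLUB (S : Set (E → E)) (σ : E → E) : Prop :=
  A.IsExo σ ∧ (∀ π ∈ S, A.exoLe π σ) ∧
    ∀ β, A.IsExo β → (∀ π ∈ S, A.exoLe π β) → A.exoLe σ β

/-- A central element (C1)–(C4). -/
def Central (c : E) : Prop :=
  (∀ a : E, ∃ a₁ a₂, A.le a₁ c ∧ A.Defined a₂ c ∧ A.R a₁ a₂ a) ∧
  (∀ a b : E, A.le a c → A.Defined b c → A.perp a b) ∧
  (∀ a b s : E, A.le a c → A.le b c → A.R a b s → A.le s c) ∧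
  (∀ a b ab : E, A.Defined a c → A.Defined b c → A.R a b ab → A.Defined ab c)

/-- `A.ListSumsTo [e₁, …, eₙ] s` : the orthosum e₁ ⊕ (e₂ ⊕ (⋯ ⊕ eₙ)) is
defined and equals s (empty orthosum is 0). -/
def ListSumsTo (A : PartialAlg E) : List E → E → Prop
  | [], s => s = A.zero
  | a :: l, s => ∃ t, A.ListSumsTo l t ∧ A.R a t s

/-- The finite subfamily indexed by F is orthogonal with orthosum s:
every enumeration of F yields the orthosum s. -/
def FinsetSumsTo {ι : Type v} (e : ι → E) (F : Finset ι) (s : E) : Prop :=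
  ∀ l : List ι, l.Nodup →
    (letI : DecidableEq ι := Classical.decEq ι; l.toFinset) = F →
    A.ListSumsTo (l.map e) s

/-- A family is orthogonal iff every finite subfamily is orthogonal
(all enumerations have a common orthosum). -/
def IsOrthogonal {ι : Type v} (e : ι → E) : Prop :=
  ∀ F : Finset ι, ∃ s, A.FinsetSumsTo e F s

/-- A family is orthosummable with orthosum s iff it is orthogonal and s is
the supremum of its finite partial orthosums. -/
def IsOrthosum {ι : Type v} (e : ι → E) (s : E) : Prop :=
  A.IsOrthogonal e ∧ A.IsSup {t | ∃ F : Finset ι, A.FinsetSumsTo e F t} s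

/-- A family (eᵢ) is ΓEX-orthogonal iff there is a pairwise disjoint family
(πᵢ) in the exocenter with πᵢ eᵢ = eᵢ for all i. -/
def GEXOrthogonal {ι : Type v} (e : ι → E) : Prop :=
  ∃ π : ι → E → E, (∀ i, A.IsExo (π i)) ∧
    (∀ i j, i ≠ j → A.exoDisjoint (π i) (π j)) ∧ ∀ i, π i (e i) = e i

/-- E is centrally orthocomplete: (CO1) every ΓEX-orthogonal family is
orthosummable, and (CO2) orthosums respect one-sided summability. -/
def IsCOGPEA : Prop :=
  (∀ {ι : Type u} (e : ι → E), A.GEXOrthogonal e → ∃ s, A.IsOrthosum e s) ∧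
  (∀ {ι : Type u} (e : ι → E) (s : E), A.GEXOrthogonal e → A.IsOrthosum e s →
    ∀ a : E, ((∀ i, A.Defined a (e i)) → A.Defined a s) ∧
             ((∀ i, A.Defined (e i) a) → A.Defined s a))

/-- γ is the exocentral cover of e: the smallest element of ΓEX(E) fixing e. -/
def IsExoCover (e : E) (γ : E → E) : Prop :=
  A.IsExo γ ∧ γ e = e ∧ ∀ π, A.IsExo π → π e = e → A.exoLe γ π

/-- The restriction of the partial algebra to a subset containing 0 (with the
operation defined whenever it is defined in E and the result lies in the subset). -/
def restrictSet (S : Set E) (h0 : A.zero ∈ S) : PartialAlg S where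
  R a b s := A.R a.1 b.1 s.1
  zero := ⟨A.zero, h0⟩

/-- The axioms (PEA1)–(PEA4) of a pseudoeffect algebra with unit `one`
(including single-valuedness of the partial operation). -/
def IsPEA (one : E) : Prop :=
  (∀ a b c d : E, A.R a b c → A.R a b d → c = d) ∧
  -- (PEA1)
  (∀ a b c ab abc : E, A.R a b ab → A.R ab c abc → ∃ bc, A.R b c bc ∧ A.R a bc abc) ∧
  (∀ a b c bc abc : E, A.R b c bc → A.R a bc abc → ∃ ab, A.R a b ab ∧ A.R ab c abc) ∧
  -- (PEA2)
  (∀ a : E, ∃! d, A.R a d one) ∧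
  (∀ a : E, ∃! e, A.R e a one) ∧
  -- (PEA3)
  (∀ a b s : E, A.R a b s → (∃ d, A.R d a s) ∧ (∃ e, A.R b e s)) ∧
  -- (PEA4)
  (∀ a s : E, A.R one a s ∨ A.R a one s → a = A.zero)

end PartialAlg

end GPEApaper

namespace GPEApaper
namespace PartialAlg

variable {E : Type*} {A : PartialAlg E}

section Basic

lemma rfunc (hA : A.IsGPEA) {a b c d : E} (h1 : A.R a b c) (h2 : A.R a b d) : c = d :=
  hA.1 a b c d h1 h2

lemma hass1 (hA : A.IsGPEA) {a b c ab abc : E} (h1 : A.R a b ab) (h2 : A.R ab c abc) :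
    ∃ bc, A.R b c bc ∧ A.R a bc abc := hA.2.1 a b c ab abc h1 h2

lemma hass2 (hA : A.IsGPEA) {a b c bc abc : E} (h1 : A.R b c bc) (h2 : A.R a bc abc) :
    ∃ ab, A.R a b ab ∧ A.R ab c abc := hA.2.2.1 a b c bc abc h1 h2

lemma hconj (hA : A.IsGPEA) {a b s : E} (h : A.R a b s) :
    (∃ d, A.R d a s) ∧ (∃ e, A.R b e s) := hA.2.2.2.1 a b s h

lemma hcl (hA : A.IsGPEA) {a b c s : E} (h1 : A.R a b s) (h2 : A.R a c s) : b = c :=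
  hA.2.2.2.2.1 a b c s h1 h2

lemma hcr (hA : A.IsGPEA) {a b c s : E} (h1 : A.R b a s) (h2 : A.R c a s) : b = c :=
  hA.2.2.2.2.2.1 a b c s h1 h2

lemma hpos (hA : A.IsGPEA) {a b : E} (h : A.R a b A.zero) : a = A.zero ∧ b = A.zero :=
  hA.2.2.2.2.2.2.1 a b h

lemma hz1 (hA : A.IsGPEA) (a : E) : A.R a A.zero a := (hA.2.2.2.2.2.2.2 a).1

lemma hz2 (hA : A.IsGPEA) (a : E) : A.R A.zero a a := (hA.2.2.2.2.2.2.2 a).2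

lemma le_refl (hA : A.IsGPEA) (a : E) : A.le a a := ⟨A.zero, hz1 hA a⟩

lemma zero_le (hA : A.IsGPEA) (a : E) : A.le A.zero a := ⟨a, hz2 hA a⟩

lemma le_of_R_left (hA : A.IsGPEA) {a b s : E} (h : A.R a b s) : A.le a s := ⟨b, h⟩

lemma le_of_R_right (hA : A.IsGPEA) {a b s : E} (h : A.R a b s) : A.le b s :=
  (hconj hA h).2

lemma le_trans (hA : A.IsGPEA) {a b c : E} (h1 : A.le a b) (h2 : A.le b c) : A.le a c := by
  obtain ⟨x, hx⟩ := h1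
  obtain ⟨y, hy⟩ := h2
  obtain ⟨xy, _, h⟩ := hass1 hA hx hy
  exact ⟨xy, h⟩

lemma le_antisymm (hA : A.IsGPEA) {a b : E} (h1 : A.le a b) (h2 : A.le b a) : a = b := by
  obtain ⟨x, hx⟩ := h1
  obtain ⟨y, hy⟩ := h2
  obtain ⟨xy, hxy, h⟩ := hass1 hA hx hy
  have hxy0 : xy = A.zero := hcl hA h (hz1 hA a)
  subst hxy0
  have := (hpos hA hxy).1
  subst this
  exact rfunc hA (hz1 hA a) hx

lemma perp_symm {a b : E} (h : A.perp a b) : A.perp b a := by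
  obtain ⟨s, h1, h2⟩ := h
  exact ⟨s, h2, h1⟩

end Basic

end PartialAlg
end GPEApaper

namespace GPEApaper
namespace PartialAlg

variable {E : Type*} {A : PartialAlg E}

section Exo

/-- The complement map of an exocenter element. -/
noncomputable def cmpl (A : PartialAlg E) (π : E → E) (a : E) : E :=
  letI : Nonempty E := ⟨A.zero⟩
  Classical.epsilon fun x => A.R (π a) x a

variable {π ξ : E → E}

lemma exo1 (hπ : A.IsExo π) {e f s : E} (h : A.R e f s) : A.R (π e) (π f) (π s) :=
  hπ.1 e f s h

lemma exo2 (hπ : A.IsExo π) (e : E) : π (π e) = π e := hπ.2.1 e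

lemma exo3 (hπ : A.IsExo π) (e : E) : A.le (π e) e := hπ.2.2.1 e

lemma exo4 (hπ : A.IsExo π) {e f : E} (h1 : π e = e) (h2 : π f = A.zero) : A.perp e f :=
  hπ.2.2.2 e f h1 h2

lemma exo_zero (hA : A.IsGPEA) (hπ : A.IsExo π) : π A.zero = A.zero := by
  obtain ⟨x, hx⟩ := exo3 hπ A.zero
  exact (hpos hA hx).1

lemma exo_mono (hA : A.IsGPEA) (hπ : A.IsExo π) {a b : E} (h : A.le a b) :
    A.le (π a) (π b) := by
  obtain ⟨x, hx⟩ := h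
  exact ⟨π x, exo1 hπ hx⟩

lemma cmpl_spec (hπ : A.IsExo π) (a : E) : A.R (π a) (cmpl A π a) a := by
  letI : Nonempty E := ⟨A.zero⟩
  exact Classical.epsilon_spec (hπ.2.2.1 a)

lemma cmpl_kill (hA : A.IsGPEA) (hπ : A.IsExo π) (a : E) : π (cmpl A π a) = A.zero := by
  have h1 := exo1 hπ (cmpl_spec hπ a)
  rw [exo2 hπ] at h1
  exact hcl hA h1 (hz1 hA (π a))

/-- if π fixes a, then cmpl π a = 0 -/
lemma cmpl_of_fix (hA : A.IsGPEA) (hπ : A.IsExo π) {a : E} (h : π a = a) :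
    cmpl A π a = A.zero := by
  have h1 := cmpl_spec hπ a
  rw [h] at h1
  exact hcl hA h1 (hz1 hA a)

/-- if π kills a, then cmpl π a = a -/
lemma cmpl_of_kill (hA : A.IsGPEA) (hπ : A.IsExo π) {a : E} (h : π a = A.zero) :
    cmpl A π a = a := by
  have h1 := cmpl_spec hπ a
  rw [h] at h1
  exact hcl hA h1 (hz2 hA a)

lemma fix_down (hA : A.IsGPEA) (hπ : A.IsExo π) {a b : E} (ha : π a = a) (h : A.le b a) :
    π b = b := by
  obtain ⟨x, hx⟩ := h
  have hpx : A.R (π b) (π x) a := by have := exo1 hπ hx; rwa [ha] at this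
  obtain ⟨u, hu⟩ := exo3 hπ b
  obtain ⟨v, hv⟩ := exo3 hπ x
  -- a = (πb ⊕ u) ⊕ x = πb ⊕ (u ⊕ x)
  obtain ⟨ux, hux, hx2⟩ := hass1 hA hu hx
  -- cancel with hpx : πx = ux, i.e. R u x (π x)
  have h3 : π x = ux := hcl hA hpx hx2
  subst h3
  -- le x (π x) and le (π x) x
  have h4 : A.le x (π x) := (hconj hA hux).2
  have h5 : x = π x := le_antisymm hA h4 ⟨v, hv⟩
  rw [← h5] at hpx
  exact (hcr hA hx hpx).symm

lemma kill_down (hA : A.IsGPEA) (hπ : A.IsExo π) {a b : E} (ha : π a = A.zero)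
    (h : A.le b a) : π b = A.zero := by
  obtain ⟨x, hx⟩ := h
  have hpx := exo1 hπ hx
  rw [ha] at hpx
  exact (hpos hA hpx).1

lemma exo_comm (hA : A.IsGPEA) (hπ : A.IsExo π) (hξ : A.IsExo ξ) (a : E) :
    π (ξ a) = ξ (π a) := by
  have hd := cmpl_spec hπ a
  have hd2 := exo1 hξ hd
  have h1 : π (ξ (π a)) = ξ (π a) :=
    fix_down hA hπ (exo2 hπ a) (exo3 hξ (π a))
  have h2 : π (ξ (cmpl A π a)) = A.zero :=
    kill_down hA hπ (cmpl_kill hA hπ a) (exo3 hξ (cmpl A π a))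
  have hd3 := exo1 hπ hd2
  rw [h1, h2] at hd3
  exact rfunc hA hd3 (hz1 hA (ξ (π a)))

lemma comp_exo (hA : A.IsGPEA) (hπ : A.IsExo π) (hξ : A.IsExo ξ) :
    A.IsExo (fun x => π (ξ x)) := by
  refine ⟨fun e f s h => exo1 hπ (exo1 hξ h), ?_, ?_, ?_⟩
  · intro e
    show π (ξ (π (ξ e))) = π (ξ e)
    rw [exo_comm hA hξ hπ (ξ e), exo2 hξ e, exo2 hπ (ξ e)]
  · intro e
    show A.le (π (ξ e)) e
    exact le_trans hA (exo3 hπ (ξ e)) (exo3 hξ e)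
  · intro e f he hf
    change π (ξ e) = e at he
    change π (ξ f) = A.zero at hf
    -- πξe = e implies ξ e = e and π e = e
    have hle : A.le e (ξ e) := by
      obtain ⟨x, hx⟩ := exo3 hπ (ξ e)
      rw [he] at hx
      exact ⟨x, hx⟩
    have hξe : ξ e = e := le_antisymm hA (exo3 hξ e) hle
    have hπe : π e = e := by rwa [hξe] at he
    have hξπf : ξ (π f) = A.zero := by rw [← exo_comm hA hπ hξ f]; exact hf
    have hab : A.R (π f) (cmpl A π f) f := cmpl_spec hπ f
    obtain ⟨u, hu1, hu2⟩ := exo4 hξ hξe hξπf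
    obtain ⟨s', hs1, hs2⟩ := exo4 hπ (exo2 hπ f) (cmpl_kill hA hπ f)
    have hsf : s' = f := rfunc hA hs1 hab
    rw [hsf] at hs2
    have hπu : π u = u := by
      have h3 := exo1 hπ hu1
      rw [hπe, exo2 hπ] at h3
      exact rfunc hA h3 hu1
    obtain ⟨w, hw1, hw2⟩ := exo4 hπ hπu (cmpl_kill hA hπ f)
    obtain ⟨ab1, hab1, hew⟩ := hass1 hA hu1 hw1
    have e1 : ab1 = f := rfunc hA hab1 hab
    rw [e1] at hew
    obtain ⟨ab2, hab2, hfe⟩ := hass2 hA hu2 hw2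
    have e2 : ab2 = f := rfunc hA hab2 hs2
    rw [e2] at hfe
    exact ⟨w, hew, hfe⟩

lemma cmpl_exo (hA : A.IsGPEA) (hπ : A.IsExo π) : A.IsExo (cmpl A π) := by
  refine ⟨?_, ?_, ?_, ?_⟩
  · intro e f s h
    have hde : A.R (π e) (cmpl A π e) e := cmpl_spec hπ e
    have hdf : A.R (π f) (cmpl A π f) f := cmpl_spec hπ f
    have hds : A.R (π s) (cmpl A π s) s := cmpl_spec hπ s
    have hps : A.R (π e) (π f) (π s) := exo1 hπ h
    -- step 1
    obtain ⟨t, ht1, ht2⟩ := hass1 hA hde h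
    -- step 2
    obtain ⟨u, hu1, hu2⟩ := hass2 hA hdf ht1
    -- step 3: perp (π f) (cmpl A π e)
    obtain ⟨m, hm1, hm2⟩ := exo4 hπ (exo2 hπ f) (cmpl_kill hA hπ e)
    have : m = u := rfunc hA hm2 hu1
    subst this
    -- step 4
    obtain ⟨v, hv1, hv2⟩ := hass1 hA hm1 hu2
    -- step 5
    obtain ⟨ab, hab, habv⟩ := hass2 hA hv2 ht2
    have : ab = π s := rfunc hA hab hps
    subst this
    have : v = cmpl A π s := hcl hA habv hds
    subst this
    exact hv1
  · intro e
    have h1 := cmpl_spec hπ (cmpl A π e)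
    rw [cmpl_kill hA hπ e] at h1
    exact hcl hA h1 (hz2 hA (cmpl A π e))
  · intro e
    exact (hconj hA (cmpl_spec hπ e)).2
  · intro e f he hf
    have hde := cmpl_spec hπ e
    have hdf := cmpl_spec hπ f
    rw [he] at hde
    rw [hf] at hdf
    have hπe0 : π e = A.zero := hcr hA hde (hz2 hA e)
    have hπff : π f = f := rfunc hA (hz1 hA (π f)) hdf
    exact perp_symm (exo4 hπ hπff hπe0)

lemma exoLe_antisymm (hA : A.IsGPEA) (hπ : A.IsExo π) (hξ : A.IsExo ξ)
    (h1 : A.exoLe π ξ) (h2 : A.exoLe ξ π) : π = ξ := by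
  funext a
  have e1 : π a = π (ξ a) := congrFun h1 a
  have e2 : ξ a = ξ (π a) := congrFun h2 a
  rw [e1, exo_comm hA hπ hξ a, ← e2]

end Exo

end PartialAlg
end GPEApaper

namespace GPEApaper
namespace PartialAlg

variable {E : Type*} {A : PartialAlg E} {c : E}

section Central

lemma central_step (hA : A.IsGPEA) (hc : A.Central c) {a a₁ a₂ b₁ b₂ n m : E}
    (h1 : A.le a₁ c) (h2 : A.Defined a₂ c) (h3 : A.R a₁ a₂ a)
    (h4 : A.le b₁ c) (h5 : A.Defined b₂ c) (h6 : A.R b₁ b₂ a)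
    (hn : A.R a₁ n c) (hm : A.R b₁ m c) : A.le n m := by
  obtain ⟨z, hz⟩ := id h2
  obtain ⟨z', hz'⟩ := id h5
  obtain ⟨s1, hs1, hs1'⟩ := hc.2.1 a₁ a₂ h1 h2
  have e1 : s1 = a := rfunc hA hs1 h3
  rw [e1] at hs1'
  obtain ⟨s2, hs2, hs2'⟩ := hc.2.1 b₁ b₂ h4 h5
  have e2 : s2 = a := rfunc hA hs2 h6
  rw [e2] at hs2'
  obtain ⟨w, hw, hanz⟩ := hass2 hA hn hz
  have e3 : w = a := rfunc hA hw hs1'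
  rw [e3] at hanz
  obtain ⟨w2, hw2, hamz'⟩ := hass2 hA hm hz'
  have e4 : w2 = a := rfunc hA hw2 hs2'
  rw [e4] at hamz'
  obtain ⟨k, hk1, hk2⟩ := hass1 hA hs2' hanz
  have hnc : A.le n c := le_of_R_right hA hn
  have hkc : A.le k c := hc.2.2.1 b₁ n k h4 hnc hk1
  obtain ⟨l, hl⟩ := hkc
  obtain ⟨w3, hw3, hzl⟩ := hass2 hA hl hz'
  have e5 : w3 = z := rfunc hA hw3 hk2
  rw [e5] at hzl
  obtain ⟨nl, hnl, hanl⟩ := hass1 hA hanz hzl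
  have e6 : nl = m := hcl hA hanl hamz'
  rw [e6] at hnl
  exact ⟨l, hnl⟩

lemma central_unique (hA : A.IsGPEA) (hc : A.Central c) {a a₁ a₂ b₁ b₂ : E}
    (h1 : A.le a₁ c) (h2 : A.Defined a₂ c) (h3 : A.R a₁ a₂ a)
    (h4 : A.le b₁ c) (h5 : A.Defined b₂ c) (h6 : A.R b₁ b₂ a) :
    a₁ = b₁ ∧ a₂ = b₂ := by
  obtain ⟨n, hn⟩ := h1
  obtain ⟨m, hm⟩ := h4
  have hnm := central_step hA hc ⟨n, hn⟩ h2 h3 ⟨m, hm⟩ h5 h6 hn hm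
  have hmn := central_step hA hc ⟨m, hm⟩ h5 h6 ⟨n, hn⟩ h2 h3 hm hn
  have e0 : n = m := le_antisymm hA hnm hmn
  rw [e0] at hn
  have hab : a₁ = b₁ := hcr hA hn hm
  refine ⟨hab, ?_⟩
  rw [hab] at h3
  exact hcl hA h3 h6

lemma central_exo (hA : A.IsGPEA) (hc : A.Central c) :
    ∃ ρ : E → E, A.IsExo ρ ∧ ρ c = c ∧ ∀ x, A.le (ρ x) c := by
  have hex : ∀ a : E, ∃ p : E × E, A.le p.1 c ∧ A.Defined p.2 c ∧ A.R p.1 p.2 a := by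
    intro a
    obtain ⟨a₁, a₂, h⟩ := hc.1 a
    exact ⟨(a₁, a₂), h⟩
  have spec1 : ∀ a, A.le (hex a).choose.1 c := fun a => ((hex a).choose_spec).1
  have spec2 : ∀ a, A.Defined (hex a).choose.2 c := fun a => ((hex a).choose_spec).2.1
  have spec3 : ∀ a, A.R (hex a).choose.1 (hex a).choose.2 a := fun a => ((hex a).choose_spec).2.2
  set ρ : E → E := fun a => (hex a).choose.1 with hρdef
  have char : ∀ a x₁ x₂, A.le x₁ c → A.Defined x₂ c → A.R x₁ x₂ a → ρ a = x₁ := by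
    intro a x₁ x₂ hx1 hx2 hx3
    exact (central_unique hA hc (spec1 a) (spec2 a) (spec3 a) hx1 hx2 hx3).1
  have hz0 : A.Defined A.zero c := ⟨c, hz2 hA c⟩
  refine ⟨ρ, ⟨?_, ?_, ?_, ?_⟩, ?_, spec1⟩
  · -- EXC1
    intro e f s h
    have hde := spec3 e
    have hdf := spec3 f
    obtain ⟨t, ht1, ht2⟩ := hass1 hA hde h
    obtain ⟨u, hu1, hu2⟩ := hass2 hA hdf ht1
    obtain ⟨mm, hm1, hm2⟩ := hc.2.1 (ρ f) _ (spec1 f) (spec2 e)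
    have e1 : mm = u := rfunc hA hm2 hu1
    rw [e1] at hm1
    obtain ⟨v, hv1, hv2⟩ := hass1 hA hm1 hu2
    obtain ⟨w, hw1, hw2⟩ := hass2 hA hv2 ht2
    have hwc : A.le w c := hc.2.2.1 _ _ _ (spec1 e) (spec1 f) hw1
    have hvc : A.Defined v c := hc.2.2.2 _ _ _ (spec2 e) (spec2 f) hv1
    have e2 : ρ s = w := char s w v hwc hvc hw2
    rw [e2]
    exact hw1
  · -- EXC2
    intro a
    exact char (ρ a) (ρ a) A.zero (spec1 a) hz0 (hz1 hA (ρ a))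
  · -- EXC3
    intro a
    exact le_of_R_left hA (spec3 a)
  · -- EXC4
    intro e f he hf
    have hec : A.le e c := by rw [← he]; exact spec1 e
    have hf2 := spec3 f
    rw [show (hex f).choose.1 = A.zero from hf] at hf2
    have e3 : f = (hex f).choose.2 := hcl hA (hz2 hA f) hf2
    have hfc : A.Defined f c := by rw [e3]; exact spec2 f
    exact hc.2.1 e f hec hfc
  · -- ρ c = c
    exact char c c A.zero (le_refl hA c) hz0 (hz1 hA c)

/-- For central c, the exocentral cover of c maps everything below c. -/
lemma central_cover_le (hA : A.IsGPEA) (hc : A.Central c) {γc : E → E}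
    (hγc : A.IsExoCover c γc) (f : E) : A.le (γc f) c := by
  obtain ⟨ρ, hρ, hρc, hρle⟩ := central_exo hA hc
  have h1 : A.exoLe γc ρ := hγc.2.2 ρ hρ hρc
  have h2 : γc f = γc (ρ f) := congrFun h1 f
  rw [h2]
  exact le_trans hA (exo3 hγc.1 (ρ f)) (hρle f)

/-- Conversely, if the cover of c is everywhere below c, then c is central. -/
lemma cover_le_central (hA : A.IsGPEA) {γc : E → E} (hγc : A.IsExoCover c γc)
    (hinf : ∀ f, A.le (γc f) c) : A.Central c := by
  have hexo := hγc.1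
  have hfix : γc c = c := hγc.2.1
  have hkill : ∀ x, A.Defined x c → γc x = A.zero := by
    rintro x ⟨s, hs⟩
    have h1 : A.R (γc x) c (γc s) := by
      have := exo1 hexo hs
      rwa [hfix] at this
    have h2 : A.le c (γc s) := le_of_R_right hA h1
    have h3 : γc s = c := le_antisymm hA (hinf s) h2
    rw [h3] at h1
    exact hcr hA h1 (hz2 hA c)
  refine ⟨?_, ?_, ?_, ?_⟩
  · -- C1
    intro a
    refine ⟨γc a, cmpl A γc a, hinf a, ?_, cmpl_spec hexo a⟩
    obtain ⟨s, _, h2⟩ := exo4 hexo hfix (cmpl_kill hA hexo a)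
    exact ⟨s, h2⟩
  · -- C2
    intro a b ha hb
    exact exo4 hexo (fix_down hA hexo hfix ha) (hkill b hb)
  · -- C3
    intro a b s ha hb hs
    have h1 := exo1 hexo hs
    rw [fix_down hA hexo hfix ha, fix_down hA hexo hfix hb] at h1
    have h2 : γc s = s := rfunc hA h1 hs
    rw [← h2]
    exact hinf s
  · -- C4
    intro a b ab ha hb hab
    have h1 := exo1 hexo hab
    rw [hkill a ha, hkill b hb] at h1
    have h2 : γc ab = A.zero := rfunc hA h1 (hz1 hA A.zero)
    obtain ⟨s, _, h4⟩ := exo4 hexo hfix h2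
    exact ⟨s, h4⟩

end Central

end PartialAlg
end GPEApaper

namespace GPEApaper
namespace PartialAlg

variable {E : Type*} {A : PartialAlg E}

/-- Key step for the hull-system property: if κ is the exocentral cover of f
and ξ is an exocenter element fixing π f, then π ∘ κ ≤ ξ. -/
lemma key_lemma (hA : A.IsGPEA) {π κ ξ : E → E} {f : E}
    (hπ : A.IsExo π) (hκ : A.IsExo κ) (hξ : A.IsExo ξ)
    (hκmin : ∀ σ, A.IsExo σ → σ f = f → A.exoLe κ σ)
    (hξπf : ξ (π f) = π f) :
    A.exoLe (fun x => π (κ x)) ξ := by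
  have hξ' := cmpl_exo hA hξ
  have hτ : A.IsExo (fun y => cmpl A ξ (π y)) := comp_exo hA hξ' hπ
  have hτ' := cmpl_exo hA hτ
  have hτf : (fun y => cmpl A ξ (π y)) f = A.zero := cmpl_of_fix hA hξ hξπf
  have hτ'f : cmpl A (fun y => cmpl A ξ (π y)) f = f := cmpl_of_kill hA hτ hτf
  have hκle := hκmin _ hτ' hτ'f
  have key : ∀ x, π (κ (cmpl A ξ x)) = A.zero := by
    intro x
    have hπz : π (cmpl A ξ (π x)) = cmpl A ξ (π x) := by
      rw [exo_comm hA hπ hξ' (π x), exo2 hπ x]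
    have hτz : (fun y => cmpl A ξ (π y)) (cmpl A ξ (π x)) = cmpl A ξ (π x) := by
      show cmpl A ξ (π (cmpl A ξ (π x))) = cmpl A ξ (π x)
      rw [hπz, exo2 hξ' (π x)]
    have hτ'z : cmpl A (fun y => cmpl A ξ (π y)) (cmpl A ξ (π x)) = A.zero :=
      cmpl_of_fix hA hτ hτz
    calc π (κ (cmpl A ξ x)) = κ (π (cmpl A ξ x)) := exo_comm hA hπ hκ _
      _ = κ (cmpl A ξ (π x)) := by rw [exo_comm hA hπ hξ' x]
      _ = κ (cmpl A (fun y => cmpl A ξ (π y)) (cmpl A ξ (π x))) := congrFun hκle _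
      _ = A.zero := by rw [hτ'z]; exact exo_zero hA hκ
  funext x
  have hd := cmpl_spec hξ x
  have h1 := exo1 hπ (exo1 hκ hd)
  rw [key x] at h1
  exact rfunc hA h1 (hz1 hA (π (κ (ξ x))))

end PartialAlg
end GPEApaper


open GPEApaper PartialAlg in
/-- Theorem 6.6: in a COGPEA, the exocentral cover system (γ_e) is a hull
system, the center Γ(E) is exactly the set of γ-invariant elements
(c with γ_c f = c ∧ f for all f), and for central c, γ_c = π_c (the unique
element of ΓEX(E) whose range is E[0,c]). -/
theorem stmt_17 {E : Type u} (A : PartialAlg E) (hA : A.IsGPEA)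
    (hCO : A.IsCOGPEA) (γ : E → E → E)
    (hγ : ∀ a : E, A.IsExoCover a (γ a)) :
    -- (γ_e) is a hull system
    ((γ A.zero = fun _ => A.zero) ∧
      (∀ e : E, γ e e = e) ∧
      (∀ e f : E, γ (γ e f) = γ e ∘ γ f)) ∧
    -- Γ(E) is the set of γ-invariant elements
    ({c : E | A.Central c} = {c : E | ∀ f : E, A.IsInf {c, f} (γ c f)}) ∧
    -- for c ∈ Γ(E), γ_c = π_c
    (∀ c : E, A.Central c → ∀ π : E → E, A.IsExo π →
      Set.range π = {a : E | A.le a c} → γ c = π) := by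
  have hzmap : A.IsExo (fun _ : E => A.zero) := by
    refine ⟨fun e f s h => hz1 hA A.zero, fun e => rfl, fun e => zero_le hA e, ?_⟩
    intro e f he hf
    rw [← he]
    exact ⟨f, hz2 hA f, hz1 hA f⟩
  refine ⟨⟨?_, fun e => (hγ e).2.1, ?_⟩, ?_, ?_⟩
  · -- (1a) γ 0 is the zero map
    funext x
    have h1 : A.exoLe (γ A.zero) (fun _ => A.zero) := (hγ A.zero).2.2 _ hzmap rfl
    have h2 : γ A.zero x = γ A.zero A.zero := congrFun h1 x
    rw [h2, (hγ A.zero).2.1]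
  · -- (1c) hull-system composition law
    intro e f
    have hπ := (hγ e).1
    have hκ := (hγ f).1
    have hξ := (hγ (γ e f)).1
    have hσ : A.IsExo (fun x => γ e (γ f x)) := comp_exo hA hπ hκ
    have hfix : (fun x => γ e (γ f x)) (γ e f) = γ e f := by
      show γ e (γ f (γ e f)) = γ e f
      rw [exo_comm hA hκ hπ f, (hγ f).2.1, exo2 hπ f]
    have hdir1 : A.exoLe (γ (γ e f)) (fun x => γ e (γ f x)) :=
      (hγ (γ e f)).2.2 _ hσ hfix
    have hdir2 : A.exoLe (fun x => γ e (γ f x)) (γ (γ e f)) :=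
      key_lemma hA hπ hκ hξ (fun σ h1 h2 => (hγ f).2.2 σ h1 h2) ((hγ (γ e f)).2.1)
    exact exoLe_antisymm hA hξ hσ hdir1 hdir2
  · -- (2) the center is the set of γ-invariant elements
    ext c
    simp only [Set.mem_setOf_eq]
    constructor
    · intro hc f
      refine ⟨?_, ?_⟩
      · intro x hx
        rcases hx with rfl | hx
        · exact central_cover_le hA hc (hγ x) f
        · rw [Set.mem_singleton_iff] at hx
          rw [hx]
          exact exo3 (hγ c).1 f
      · intro b hb
        have hbc := hb c (Set.mem_insert c {f})
        have hbf := hb f (by simp)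
        have h1 : γ c b = b := fix_down hA (hγ c).1 ((hγ c).2.1) hbc
        have h2 := exo_mono hA (hγ c).1 hbf
        rw [h1] at h2
        exact h2
    · intro hinf
      exact cover_le_central hA (hγ c)
        (fun f => (hinf f).1 c (Set.mem_insert c {f}))
  · -- (3) γ_c = π_c for central c
    intro c hc π hπ hrange
    have hπle : ∀ x, A.le (π x) c := by
      intro x
      have h1 : π x ∈ {a : E | A.le a c} := hrange ▸ Set.mem_range_self x
      exact h1
    have hπc : π c = c := by
      have h1 : c ∈ Set.range π := by rw [hrange]; exact le_refl hA c
      obtain ⟨b, hb⟩ := h1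
      rw [← hb, exo2 hπ]
    have h1 : A.exoLe (γ c) π := (hγ c).2.2 π hπ hπc
    have h2 : A.exoLe π (γ c) := by
      funext x
      have hy : γ c (π (cmpl A (γ c) x)) = A.zero := by
        rw [exo_comm hA (hγ c).1 hπ, cmpl_kill hA (hγ c).1 x, exo_zero hA hπ]
      have hyfix : γ c (π (cmpl A (γ c) x)) = π (cmpl A (γ c) x) :=
        fix_down hA (hγ c).1 ((hγ c).2.1) (hπle _)
      have hy0 : π (cmpl A (γ c) x) = A.zero := by rw [← hyfix, hy]
      have h3 := exo1 hπ (cmpl_spec (hγ c).1 x)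
      rw [hy0] at h3
      exact rfunc hA h3 (hz1 hA (π (γ c x)))
    exact exoLe_antisymm hA (hγ c).1 hπ h1 h2
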